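/- Let A be symmetric positive semidefinite with smallest nonzero eigenvalue λ̂ > 0, and let w be a vector in the range of A^{1/2}. If A^{1/2}w = −g − εd − e for vectors g, d, e and scalar ε > 0, then for any β > 1 and φ > 1: ‖w‖² ≤ (βε²/((β−1)λ̂))‖d‖² + (φβ/λ̂)‖g‖² + (βφ/((φ−1)λ̂))‖e‖². -/

import Mathlib

/-!
Write `w = A^{1/2} y`. Then `‖w‖² = yᵀ A y` and `‖A^{1/2} w‖² = ‖A y‖² = yᵀ A² y`, and
`A² - λ̂ A` is positive semidefinite because every eigenvalue of `A` is either `0` or at least `λ̂`.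
Hence `λ̂ ‖w‖² ≤ ‖g + ε d + e‖²`, and Young's inequality `(a + b)² ≤ β a² + β/(β-1) b²`,
applied once with `β` and once with `φ`, bounds the right-hand side.
-/

open Matrix

/-- The positive semidefinite square root of a positive semidefinite matrix
(the definition removed from Mathlib, restored verbatim). -/
noncomputable def Matrix.PosSemidef.sqrt {n : Type*} [Fintype n] [DecidableEq n]
    {A : Matrix n n ℝ} (hA : A.PosSemidef) : Matrix n n ℝ :=
  hA.1.eigenvectorUnitary.1 * diagonal ((↑) ∘ (√·) ∘ hA.1.eigenvalues) *
  (star hA.1.eigenvectorUnitary : Matrix n n ℝ)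

open scoped MatrixOrder

namespace Matrix

variable {n : Type*} [Fintype n] [DecidableEq n] {A : Matrix n n ℝ}

lemma PosSemidef.sqrt_eq_cfc (hA : A.PosSemidef) : hA.sqrt = cfc Real.sqrt A := by
  rw [hA.1.cfc_eq, IsHermitian.cfc, Unitary.conjStarAlgAut_apply]
  rfl

lemma PosSemidef.isHermitian_sqrt (hA : A.PosSemidef) : hA.sqrt.IsHermitian :=
  hA.sqrt_eq_cfc ▸ cfc_predicate Real.sqrt A

lemma PosSemidef.sqrt_mul_self (hA : A.PosSemidef) : hA.sqrt * hA.sqrt = A := by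
  rw [hA.sqrt_eq_cfc, ← cfc_mul Real.sqrt Real.sqrt A]
  conv_rhs => rw [← cfc_id' ℝ A]
  exact cfc_congr fun x hx => Real.mul_self_sqrt (spectrum_nonneg_of_nonneg hA.nonneg hx)

/-- The eigenvalues of `A * A - lam • A` are `μ (μ - lam)` for the eigenvalues `μ` of `A`. -/
lemma PosSemidef.posSemidef_mul_self_sub_smul (hA : A.PosSemidef) {lam : ℝ}
    (hlam : ∀ i, hA.1.eigenvalues i ≠ 0 → lam ≤ hA.1.eigenvalues i) :
    (A * A - lam • A).PosSemidef := by
  have hcfc : cfc (fun x => x * x - lam * x) A = A * A - lam • A := by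
    rw [cfc_sub (fun x => x * x) (lam * ·), cfc_const_mul_id lam A,
      cfc_mul (fun x => x) (fun x => x), cfc_id' ℝ A]
  rw [← hcfc, ← nonneg_iff_posSemidef]
  refine cfc_nonneg fun x hx => ?_
  obtain ⟨i, rfl⟩ := hA.1.spectrum_real_eq_range_eigenvalues ▸ hx
  rcases eq_or_ne (hA.1.eigenvalues i) 0 with h | h
  · simp [h]
  · nlinarith [hlam i h, hA.eigenvalues_nonneg i]

lemma IsSymm.mulVec_dotProduct_mulVec {R m : Type*} [CommSemiring R] [Fintype m]
    {S : Matrix m m R} (hS : S.IsSymm) (x : m → R) :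
    (S *ᵥ x) ⬝ᵥ (S *ᵥ x) = x ⬝ᵥ ((S * S) *ᵥ x) := by
  rw [← mulVec_mulVec, dotProduct_mulVec, ← mulVec_transpose, hS.eq, dotProduct_comm]

lemma PosSemidef.mul_dotProduct_mulVec_le (hA : A.PosSemidef) {lam : ℝ}
    (hlam : ∀ i, hA.1.eigenvalues i ≠ 0 → lam ≤ hA.1.eigenvalues i) (x : n → ℝ) :
    lam * (x ⬝ᵥ (A *ᵥ x)) ≤ (A *ᵥ x) ⬝ᵥ (A *ᵥ x) := by
  have h := (hA.posSemidef_mul_self_sub_smul hlam).dotProduct_mulVec_nonneg x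
  rw [star_trivial, sub_mulVec, smul_mulVec, dotProduct_sub, dotProduct_smul, smul_eq_mul] at h
  rw [(isHermitian_iff_isSymm.mp hA.1).mulVec_dotProduct_mulVec]
  linarith

lemma PosSemidef.mul_sum_sq_le_sum_sq_sqrt_mulVec (hA : A.PosSemidef) {lam : ℝ}
    (hlam : ∀ i, hA.1.eigenvalues i ≠ 0 → lam ≤ hA.1.eigenvalues i) {w : n → ℝ}
    (hw : ∃ y, w = hA.sqrt *ᵥ y) :
    lam * ∑ i, w i ^ 2 ≤ ∑ i, (hA.sqrt *ᵥ w) i ^ 2 := by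
  obtain ⟨y, rfl⟩ := hw
  have hS := isHermitian_iff_isSymm.mp hA.isHermitian_sqrt
  simp only [sq, ← dotProduct.eq_1]
  rw [hS.mulVec_dotProduct_mulVec, mulVec_mulVec, hA.sqrt_mul_self]
  exact hA.mul_dotProduct_mulVec_le hlam y

end Matrix

lemma add_sq_le_of_one_lt {β : ℝ} (hβ : 1 < β) (a b : ℝ) :
    (a + b) ^ 2 ≤ β * a ^ 2 + β / (β - 1) * b ^ 2 := by
  have hβ' : 0 < β - 1 := sub_pos.mpr hβ
  have hgap : β * a ^ 2 + β / (β - 1) * b ^ 2 - (a + b) ^ 2 =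
      ((β - 1) * a - b) ^ 2 / (β - 1) := by
    field_simp
    ring
  nlinarith [div_nonneg (sq_nonneg ((β - 1) * a - b)) hβ'.le]

namespace Finset

variable {ι : Type*} (s : Finset ι) {β φ : ℝ}

lemma sum_add_sq_le_of_one_lt (hβ : 1 < β) (u v : ι → ℝ) :
    ∑ i ∈ s, (u i + v i) ^ 2 ≤ β * ∑ i ∈ s, u i ^ 2 + β / (β - 1) * ∑ i ∈ s, v i ^ 2 := by
  rw [mul_sum, mul_sum, ← sum_add_distrib]
  exact sum_le_sum fun i _ => add_sq_le_of_one_lt hβ (u i) (v i)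

lemma sum_add_add_sq_le_of_one_lt (hβ : 1 < β) (hφ : 1 < φ) (u v w : ι → ℝ) :
    ∑ i ∈ s, (u i + v i + w i) ^ 2 ≤ β / (β - 1) * ∑ i ∈ s, v i ^ 2 +
      φ * β * ∑ i ∈ s, u i ^ 2 + β * φ / (φ - 1) * ∑ i ∈ s, w i ^ 2 :=
  calc ∑ i ∈ s, (u i + v i + w i) ^ 2 = ∑ i ∈ s, ((u i + w i) + v i) ^ 2 :=
        sum_congr rfl fun i _ => by ring
    _ ≤ β * ∑ i ∈ s, (u i + w i) ^ 2 + β / (β - 1) * ∑ i ∈ s, v i ^ 2 :=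
        sum_add_sq_le_of_one_lt s hβ _ _
    _ ≤ β * (φ * ∑ i ∈ s, u i ^ 2 + φ / (φ - 1) * ∑ i ∈ s, w i ^ 2) +
          β / (β - 1) * ∑ i ∈ s, v i ^ 2 := by
        gcongr ?_ + _
        exact mul_le_mul_of_nonneg_left (sum_add_sq_le_of_one_lt s hφ _ _) (by linarith)
    _ = _ := by ring

end Finset

theorem dual_error_bound_with_error_general {n : ℕ} (A : Matrix (Fin n) (Fin n) ℝ)
    (hA : A.PosSemidef) (lam : ℝ) (hlam : 0 < lam)
    (hlam_min : ∀ i, hA.1.eigenvalues i ≠ 0 → lam ≤ hA.1.eigenvalues i)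
    (w g d e : Fin n → ℝ) (ε β φ : ℝ) (hβ : 1 < β) (hφ : 1 < φ)
    (hw : ∃ y, w = hA.sqrt.mulVec y)
    (hid : hA.sqrt.mulVec w = -g - ε • d - e) :
    ∑ i, w i ^ 2 ≤
      β * ε ^ 2 / ((β - 1) * lam) * ∑ i, d i ^ 2 + φ * β / lam * ∑ i, g i ^ 2 +
        β * φ / ((φ - 1) * lam) * ∑ i, e i ^ 2 := by
  have hres : ∑ i, (hA.sqrt *ᵥ w) i ^ 2 = ∑ i, (g i + ε * d i + e i) ^ 2 := by
    rw [hid]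
    refine Finset.sum_congr rfl fun i _ => ?_
    simp only [Pi.sub_apply, Pi.neg_apply, Pi.smul_apply, smul_eq_mul]
    ring
  have hd : ∑ i, (ε * d i) ^ 2 = ε ^ 2 * ∑ i, d i ^ 2 := by
    simp_rw [mul_pow, ← Finset.mul_sum]
  have hbound := (hA.mul_sum_sq_le_sum_sq_sqrt_mulVec hlam_min hw).trans <|
    hres.trans_le (Finset.univ.sum_add_add_sq_le_of_one_lt hβ hφ g (ε * d ·) e)
  rw [hd, ← le_div_iff₀' hlam] at hbound
  refine hbound.trans_eq ?_
  simp only [div_eq_mul_inv, mul_inv]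
  ring

theorem dual_error_bound_with_error {n : ℕ} (A : Matrix (Fin n) (Fin n) ℝ)
    (hA : A.PosSemidef) (lam : ℝ) (hlam : 0 < lam)
    (hlam_min : ∀ i, hA.1.eigenvalues i ≠ 0 → lam ≤ hA.1.eigenvalues i)
    (w g d e : Fin n → ℝ) (ε β φ : ℝ) (hε : 0 < ε) (hβ : 1 < β) (hφ : 1 < φ)
    (hw : ∃ y, w = hA.sqrt.mulVec y)
    (hid : hA.sqrt.mulVec w = -g - ε • d - e) :
    ∑ i, w i ^ 2 ≤
      β * ε ^ 2 / ((β - 1) * lam) * ∑ i, d i ^ 2 + φ * β / lam * ∑ i, g i ^ 2 +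
        β * φ / ((φ - 1) * lam) * ∑ i, e i ^ 2 :=
  dual_error_bound_with_error_general A hA lam hlam hlam_min w g d e ε β φ hβ hφ hw hid
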